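/- arXiv:1712.09386 — 6 statements merged into one kernel-verified Lean document; each statement's English description precedes it below -/
import Mathlib

section
/- Let R be a unital ring with 2 and 3 invertible, and let s = 1 + n with n ≠ 0, n² = 0. Suppose there are idempotents e, f with n = enf and fe = 0. Then u := 2e - 1 is an involution satisfying u·s·u = s⁻¹, the element r := 1 + e is invertible with inverse 1 - e/2 and satisfies r·s·r⁻¹ = s², and s³ ≠ 1. -/
theorem stmt6 {R : Type*} [Ring R] [Invertible (2:R)] [Invertible (3:R)]
    (n e f : R) (hn0 : n ≠ 0) (hn : n * n = 0)
    (he : e * e = e) (hf : f * f = f)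
    (h1 : n = e * n * f) (h2 : f * e = 0) :
    (2*e-1) * (2*e-1) = 1 ∧
    (2*e-1) * (1+n) * (2*e-1) = 2 - (1+n) ∧
    (1+e) * (1 - ⅟(2:R) * e) = 1 ∧ (1 - ⅟(2:R) * e) * (1+e) = 1 ∧
    (1+e) * (1+n) * (1 - ⅟(2:R) * e) = (1+n) * (1+n) ∧
    (1+n) * (1+n) * (1+n) ≠ 1 := by
  have tw : (2:R) = 1 + 1 := by norm_num
  have fo : (4:R) = 1 + 1 + 1 + 1 := by norm_num
  have hen : e * n = n := by
    conv_lhs => rw [h1, ← mul_assoc, ← mul_assoc, he]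
    exact h1.symm
  have hne : n * e = 0 := by
    rw [h1, mul_assoc, mul_assoc, h2, mul_zero, mul_zero]
  have auxL : ∀ x y : R, (2:R) * x = 2 * y → x = y := by
    intro x y h
    have := congrArg (fun z => ⅟(2:R) * z) h
    simpa [← mul_assoc, invOf_mul_self] using this
  have auxR : ∀ x y : R, x * (2:R) = y * 2 → x = y := by
    intro x y h
    have := congrArg (fun z => z * ⅟(2:R)) h
    simpa [mul_assoc, mul_invOf_self] using this
  have hC2 : (1 - ⅟(2:R) * e) * 2 = 2 - e := by
    have h' : ⅟(2:R) * e * 2 = e := by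
      rw [mul_assoc, mul_two, ← two_mul, ← mul_assoc, invOf_mul_self, one_mul]
    rw [sub_mul, h', one_mul]
  refine ⟨?_, ?_, ?_, ?_, ?_, ?_⟩
  · calc (2*e-1) * (2*e-1) = 4*(e*e) - 4*e + 1 := by noncomm_ring
    _ = 1 := by rw [he]; simp only [tw, fo]; abel
  · have step1 : (2*e-1) * (1+n) = 2*e - 1 + n := by
      calc (2*e-1) * (1+n) = 2*e + 2*(e*n) - 1 - n := by noncomm_ring
      _ = 2*e - 1 + n := by rw [hen]; simp only [tw, fo, mul_add, add_mul, mul_one, one_mul]; abel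
    rw [step1]
    calc (2*e - 1 + n) * (2*e-1)
        = 4*(e*e) - 4*e + 2*(n*e) - n + 1 := by noncomm_ring
      _ = 2 - (1+n) := by rw [he, hne, mul_zero]; simp only [tw, fo]; abel
  · apply auxR
    rw [mul_assoc, hC2]
    calc (1+e) * (2 - e) = 2 + e - e*e := by simp only [tw]; noncomm_ring
    _ = 1 * 2 := by rw [he]; simp only [tw, fo, mul_add, add_mul, mul_one, one_mul]; abel
  · apply auxL
    rw [← mul_assoc]
    have h' : (2:R) * (1 - ⅟(2:R) * e) = 2 - e := by
      rw [mul_sub, ← mul_assoc, mul_invOf_self, one_mul, mul_one]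
    rw [h']
    calc (2 - e) * (1+e) = 2 + e - e*e := by simp only [tw]; noncomm_ring
    _ = 2 * 1 := by rw [he]; simp only [tw, fo, mul_add, add_mul, mul_one, one_mul]; abel
  · apply auxR
    rw [mul_assoc, hC2]
    have step1 : (1+e) * (1+n) = 1 + n + e + e*n := by noncomm_ring
    rw [step1, hen]
    calc (1 + n + e + n) * (2 - e)
        = 2 + 4*n + 2*e - e - e*e - 2*(n*e) := by simp only [tw, fo]; noncomm_ring
      _ = 2 + 4*n := by rw [he, hne, mul_zero]; simp only [tw, fo, mul_add, add_mul, mul_one, one_mul]; abel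
      _ = (1+n) * (1+n) * 2 := by
          calc (2:R) + 4*n = 2 + 4*n + 2*(n*n) := by rw [hn, mul_zero, add_zero]
          _ = (1+n) * (1+n) * 2 := by simp only [tw, fo]; noncomm_ring
  · intro h
    have key : (1+n) * (1+n) * (1+n) = 1 + 3*n + 3*(n*n) + (n*n)*n := by noncomm_ring
    rw [hn, mul_zero, zero_mul, add_zero, add_zero] at key
    rw [key] at h
    have h3 : (3:R) * n = 0 := by
      have h' := congrArg (fun z => z - 1) h
      simpa using h'
    apply hn0
    have : n = ⅟(3:R) * ((3:R) * n) := by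
      rw [← mul_assoc, invOf_mul_self, one_mul]
    rw [h3, mul_zero] at this
    exact this
end

section
/- Let R be a unital ring, s = 1 + n with n² = 0, and suppose there are idempotents e, g and an element k ∈ R with e = nk, g = kn, n = eng, and eg = ge = 0. Then an invertible element t ∈ R commutes with s if and only if, writing f = 1 - e - g, the components gte, fte, gtf all vanish and gtg = k(ete)n. -/
theorem stmt7 {R : Type*} [Ring R] (n e g k t : R) (hn : n * n = 0)
    (he : e * e = e) (hg : g * g = g)
    (h1 : e = n * k) (h2 : g = k * n) (h3 : n = e * n * g)
    (h4 : e * g = 0) (h5 : g * e = 0) (ht : IsUnit t) :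
    t * (1 + n) = (1 + n) * t ↔
      (g * t * e = 0 ∧ (1 - e - g) * t * e = 0 ∧ g * t * (1 - e - g) = 0 ∧
        g * t * g = k * (e * t * e) * n) := by
  have key : t * (1 + n) = (1 + n) * t ↔ t * n = n * t := by
    constructor
    · intro h
      have := h
      rw [mul_add, mul_one, add_mul, one_mul] at this
      exact add_left_cancel this
    · intro h
      rw [mul_add, mul_one, add_mul, one_mul, h]
  rw [key]
  -- basic identities
  have en : e * n = n := by
    calc e * n = e * (e * n * g) := by rw [← h3]
      _ = (e * e) * n * g := by noncomm_ring
      _ = e * n * g := by rw [he]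
      _ = n := h3.symm
  have ng : n * g = n := by
    calc n * g = (e * n * g) * g := by rw [← h3]
      _ = e * n * (g * g) := by noncomm_ring
      _ = e * n * g := by rw [hg]
      _ = n := h3.symm
  have ne0 : n * e = 0 := by
    calc n * e = (e * n * g) * e := by rw [← h3]
      _ = e * n * (g * e) := by noncomm_ring
      _ = 0 := by rw [h5, mul_zero]
  have gn0 : g * n = 0 := by
    calc g * n = (k * n) * n := by rw [← h2]
      _ = k * (n * n) := by noncomm_ring
      _ = 0 := by rw [hn, mul_zero]
  have nkn : n * k * n = n := by rw [← h1, en]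
  have fn0 : (1 - e - g) * n = 0 := by
    calc (1 - e - g) * n = n - e * n - g * n := by noncomm_ring
      _ = 0 := by rw [en, gn0, sub_zero, sub_self]
  have nf0 : n * (1 - e - g) = 0 := by
    calc n * (1 - e - g) = n - n * e - n * g := by noncomm_ring
      _ = 0 := by rw [ne0, ng, sub_zero, sub_self]
  constructor
  · intro htn
    refine ⟨?_, ?_, ?_, ?_⟩
    · calc g * t * e = g * t * (n * k) := by rw [h1]
        _ = g * (t * n) * k := by noncomm_ring
        _ = g * (n * t) * k := by rw [htn]
        _ = (g * n) * (t * k) := by noncomm_ring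
        _ = 0 := by rw [gn0, zero_mul]
    · calc (1 - e - g) * t * e = (1 - e - g) * t * (n * k) := by rw [h1]
        _ = (1 - e - g) * (t * n) * k := by noncomm_ring
        _ = (1 - e - g) * (n * t) * k := by rw [htn]
        _ = ((1 - e - g) * n) * (t * k) := by noncomm_ring
        _ = 0 := by rw [fn0, zero_mul]
    · calc g * t * (1 - e - g) = (k * n) * t * (1 - e - g) := by rw [← h2]
        _ = k * (n * t) * (1 - e - g) := by noncomm_ring
        _ = k * (t * n) * (1 - e - g) := by rw [htn]
        _ = (k * t) * (n * (1 - e - g)) := by noncomm_ring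
        _ = 0 := by rw [nf0, mul_zero]
    · have lhs : g * t * g = k * (n * t) := by
        calc g * t * g = (k * n) * t * (k * n) := by rw [← h2]
          _ = k * ((n * t) * k * n) := by noncomm_ring
          _ = k * ((t * n) * k * n) := by rw [htn]
          _ = k * (t * (n * k * n)) := by noncomm_ring
          _ = k * (t * n) := by rw [nkn]
          _ = k * (n * t) := by rw [htn]
      have rhs : k * (e * t * e) * n = k * (n * t) := by
        calc k * (e * t * e) * n = k * (e * (t * (e * n))) := by noncomm_ring
          _ = k * (e * (t * n)) := by rw [en]
          _ = k * (e * (n * t)) := by rw [htn]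
          _ = k * ((e * n) * t) := by noncomm_ring
          _ = k * (n * t) := by rw [en]
      rw [lhs, rhs]
  · rintro ⟨hgte, hfte, hgtf, hgtg⟩
    have hte : t * e = e * t * e := by
      have : t * e = e * t * e + g * t * e + (1 - e - g) * t * e := by noncomm_ring
      rw [this, hgte, hfte, add_zero, add_zero]
    have hgt : g * t = k * (e * t * e) * n := by
      have : g * t = g * t * e + g * t * g + g * t * (1 - e - g) := by noncomm_ring
      rw [this, hgte, hgtf, hgtg, zero_add, add_zero]
    have h4' : t * n = e * t * n := by
      calc t * n = (t * e) * n * g := by nth_rewrite 1 [h3]; noncomm_ring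
        _ = (e * t * e) * n * g := by rw [hte]
        _ = (e * t) * (e * n * g) := by noncomm_ring
        _ = e * t * n := by rw [← h3]
    have h5' : n * t = e * t * n := by
      calc n * t = e * n * (g * t) := by nth_rewrite 1 [h3]; noncomm_ring
        _ = e * n * (k * (e * t * e) * n) := by rw [hgt]
        _ = e * (n * k) * e * t * (e * n) := by noncomm_ring
        _ = e * e * e * t * n := by rw [← h1, en]
        _ = e * t * n := by rw [he, he]
    rw [h4', h5']
end

section
/- Let u, v, w be three involutions of a unital ring R with 2 invertible, with u = 2e-1, v = 2f-1, w = 2g-1 for idempotents e, f, g generating the same right ideal eR = fR = gR. Then uvw = u - v + w, uvw = wvu, uvw is an involution, and (e - f + g)R = eR, so uvw = 2(e-f+g)-1 belongs to the same Δ⁺-set. -/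
lemma absorb_aux {R : Type*} [Ring R] (e f : R)
    (he : e * e = e) (hf : f * f = f)
    (h : {x : R | ∃ r, x = e * r} = {x : R | ∃ r, x = f * r}) :
    e * f = f := by
  have hmem : f ∈ {x : R | ∃ r, x = e * r} := by
    rw [h]; exact ⟨f, hf.symm⟩
  obtain ⟨r, hr⟩ := hmem
  calc e * f = e * e * r := by rw [hr, mul_assoc]
    _ = e * r := by rw [he]
    _ = f := hr.symm

theorem stmt9 {R : Type*} [Ring R] [Invertible (2:R)] (e f g : R)
    (he : e * e = e) (hf : f * f = f) (hg : g * g = g)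
    (h1 : {x : R | ∃ r, x = e * r} = {x : R | ∃ r, x = f * r})
    (h2 : {x : R | ∃ r, x = e * r} = {x : R | ∃ r, x = g * r}) :
    (2*e-1) * (2*f-1) * (2*g-1) = (2*e-1) - (2*f-1) + (2*g-1) ∧
    (2*e-1) * (2*f-1) * (2*g-1) = (2*g-1) * (2*f-1) * (2*e-1) ∧
    ((2*e-1) * (2*f-1) * (2*g-1)) * ((2*e-1) * (2*f-1) * (2*g-1)) = 1 ∧
    {x : R | ∃ r, x = (e - f + g) * r} = {x : R | ∃ r, x = e * r} ∧
    (2*e-1) * (2*f-1) * (2*g-1) = 2 * (e - f + g) - 1 ∧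
    {x : R | (2*e-1) * (2*f-1) * (2*g-1) * x = x} = {x : R | ∃ r, x = e * r} := by
  have h3 : {x : R | ∃ r, x = f * r} = {x : R | ∃ r, x = g * r} := h1.symm.trans h2
  have hef : e * f = f := absorb_aux e f he hf h1
  have hfe : f * e = e := absorb_aux f e hf he h1.symm
  have heg : e * g = g := absorb_aux e g he hg h2
  have hge : g * e = e := absorb_aux g e hg he h2.symm
  have hfg : f * g = g := absorb_aux f g hf hg h3
  have hgf : g * f = f := absorb_aux g f hg hf h3.symm
  set s := e - f + g with hs
  have hs2 : s * s = s := by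
    simp only [hs]
    have : (e - f + g) * (e - f + g) =
        e*e - e*f + e*g - f*e + f*f - f*g + g*e - g*f + g*g := by noncomm_ring
    rw [this, he, hef, heg, hfe, hf, hfg, hge, hgf, hg]; noncomm_ring
  have key : (2*e-1) * (2*f-1) * (2*g-1) = 2 * s - 1 := by
    have expand : (2*e-1) * (2*f-1) * (2*g-1) =
        8*(e*f*g) - 4*(e*f) - 4*(e*g) - 4*(f*g) + 2*e + 2*f + 2*g - 1 := by noncomm_ring
    rw [expand, hef, heg, hfg, hs]; noncomm_ring
  have key2 : (2*g-1) * (2*f-1) * (2*e-1) = 2 * s - 1 := by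
    have expand : (2*g-1) * (2*f-1) * (2*e-1) =
        8*(g*f*e) - 4*(g*f) - 4*(g*e) - 4*(f*e) + 2*g + 2*f + 2*e - 1 := by noncomm_ring
    rw [expand, hgf, hge, hfe, hs]; noncomm_ring
  have hes : e * s = s := by rw [hs, mul_add, mul_sub, he, hef, heg]
  have hse : s * e = e := by rw [hs, add_mul, sub_mul, he, hfe, hge]; noncomm_ring
  refine ⟨by rw [key]; rw [hs]; noncomm_ring, by rw [key, key2], ?_, ?_, key, ?_⟩
  · rw [key]
    have : (2*s-1) * (2*s-1) = 4*(s*s) - 4*s + 1 := by noncomm_ring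
    rw [this, hs2]; noncomm_ring
  · ext x
    constructor
    · rintro ⟨r, rfl⟩
      exact ⟨s * r, by rw [← mul_assoc, hes]⟩
    · rintro ⟨r, rfl⟩
      exact ⟨e * r, by rw [← mul_assoc, hse]⟩
  · ext x
    simp only [Set.mem_setOf_eq, key]
    constructor
    · intro hx
      have h2x : 2 * (s * x) = 2 * x := by
        calc 2 * (s * x) = (2*s-1)*x + x := by noncomm_ring
          _ = 2 * x := by rw [hx]; noncomm_ring
      have hsx : s * x = x := by
        have := congrArg (fun y => ⅟(2:R) * y) h2x
        simpa [invOf_mul_cancel_left] using this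
      exact ⟨s * x, by rw [← mul_assoc, hes, hsx]⟩
    · rintro ⟨r, rfl⟩
      have hsx : s * (e * r) = e * r := by rw [← mul_assoc, hse]
      calc (2*s-1) * (e*r) = 2 * (s * (e*r)) - e*r := by noncomm_ring
        _ = e * r := by rw [hsx]; noncomm_ring
end

section
/- Let u = 2e - 1 and v = 2f - 1 be involutions in a unital ring R with 2 invertible, where e, f are idempotents with eR = fR. Then w := (u+v)/2 is an involution satisfying wvw = u, and w is the unique involution w' with {x : w'x = x} = eR satisfying w'vw' = u. -/
/-!
Since `eR = fR`, the idempotents satisfy `e * f = f` and `f * e = e`, so `w = (u + v) / 2 = e + f - 1`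
and its three properties are direct computations. For uniqueness, `w'` fixes `f ∈ eR`, so
`w' * v = u * w'` gives `e * w' = w' * f = f`; and `w' + 1` is fixed by `w'`, hence lies in `eR`, so
`w' + 1 = e * (w' + 1) = f + e`.
-/

theorem IsIdempotentElem.exists_eq_mul_iff {M : Type*} [Semigroup M] {e x : M}
    (he : IsIdempotentElem e) : (∃ r, x = e * r) ↔ e * x = x := by
  constructor
  · rintro ⟨r, rfl⟩
    rw [← mul_assoc, he.eq]
  · intro h
    exact ⟨x, h.symm⟩

section Ring

variable {R : Type*} [Ring R]

theorem two_mul_cancel_left [Invertible (2 : R)] {a b : R} (h : 2 * a = 2 * b) : a = b := by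
  simpa only [invOf_mul_cancel_left] using congrArg (⅟(2 : R) * ·) h

theorem invOf_two_mul_add_two_mul_sub_one [Invertible (2 : R)] (e f : R) :
    ⅟(2 : R) * ((2 * e - 1) + (2 * f - 1)) = e + f - 1 := by
  rw [show (2 * e - 1) + (2 * f - 1) = 2 * (e + f - 1) by noncomm_ring, invOf_mul_cancel_left]

variable {e f : R}

theorem add_sub_one_mul_self (he : IsIdempotentElem e) (hf : IsIdempotentElem f)
    (hef : e * f = f) (hfe : f * e = e) : (e + f - 1) * (e + f - 1) = 1 := by
  calc (e + f - 1) * (e + f - 1) = e * e + e * f + f * e + f * f - 2 * e - 2 * f + 1 := by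
        noncomm_ring
    _ = 1 := by rw [he.eq, hf.eq, hef, hfe]; noncomm_ring

theorem add_sub_one_mul_eq_self_iff [Invertible (2 : R)] (he : IsIdempotentElem e)
    (hef : e * f = f) (hfe : f * e = e) (x : R) : (e + f - 1) * x = x ↔ e * x = x := by
  have expand : (e + f - 1) * x = e * x + f * x - x := by noncomm_ring
  constructor
  · intro hx
    have hfx : f * x = e * x := by
      calc f * x = e * ((e + f - 1) * x) := by
            rw [expand, mul_sub, mul_add, ← mul_assoc, ← mul_assoc, he.eq, hef]; abel
        _ = e * x := by rw [hx]
    rw [expand, hfx] at hx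
    exact two_mul_cancel_left (by rw [two_mul, two_mul, ← sub_eq_iff_eq_add.mp hx])
  · intro hx
    rw [expand, ← hx, ← mul_assoc, ← mul_assoc, he.eq, hfe]
    abel

theorem add_sub_one_mul_two_mul_sub_one_mul (he : IsIdempotentElem e) (hf : IsIdempotentElem f)
    (hef : e * f = f) (hfe : f * e = e) :
    (e + f - 1) * (2 * f - 1) * (e + f - 1) = 2 * e - 1 := by
  have left : (e + f - 1) * (2 * f - 1) = f - e + 1 := by
    calc (e + f - 1) * (2 * f - 1) = 2 * (e * f) + 2 * (f * f) - 2 * f - e - f + 1 := by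
          noncomm_ring
      _ = f - e + 1 := by rw [hef, hf.eq]; noncomm_ring
  calc (e + f - 1) * (2 * f - 1) * (e + f - 1)
      = f * e + f * f - f - e * e - e * f + e + e + f - 1 := by rw [left]; noncomm_ring
    _ = 2 * e - 1 := by rw [hfe, hf.eq, he.eq, hef]; noncomm_ring

theorem eq_add_sub_one_of_mul_two_mul_sub_one_mul [Invertible (2 : R)] {w : R}
    (hef : e * f = f) (hw : w * w = 1)
    (hfix : ∀ x, w * x = x ↔ e * x = x) (hconj : w * (2 * f - 1) * w = 2 * e - 1) :
    w = e + f - 1 := by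
  have hwf : w * f = f := (hfix f).mpr hef
  have hintertwine : w * (2 * f - 1) = (2 * e - 1) * w := by
    rw [← hconj, mul_assoc _ w, hw, mul_one]
  have hew : e * w = f := by
    rw [← hwf]
    refine (two_mul_cancel_left ?_).symm
    rw [← sub_left_inj (a := w)]
    calc 2 * (w * f) - w = w * (2 * f - 1) := by noncomm_ring
      _ = (2 * e - 1) * w := hintertwine
      _ = 2 * (e * w) - w := by noncomm_ring
  have hfix_add_one : e * (w + 1) = w + 1 := (hfix _).mp (by rw [mul_add, hw, mul_one, add_comm])
  rw [mul_add, mul_one, hew] at hfix_add_one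
  rw [eq_sub_of_add_eq hfix_add_one.symm, add_comm f]

end Ring

theorem stmt10 {R : Type*} [Ring R] [Invertible (2:R)] (e f : R)
    (he : e * e = e) (hf : f * f = f)
    (hef : {x : R | ∃ r, x = e * r} = {x : R | ∃ r, x = f * r}) :
    (⅟(2:R) * ((2*e-1) + (2*f-1))) * (⅟(2:R) * ((2*e-1) + (2*f-1))) = 1 ∧
    {x : R | (⅟(2:R) * ((2*e-1) + (2*f-1))) * x = x} = {x : R | ∃ r, x = e * r} ∧
    (⅟(2:R) * ((2*e-1) + (2*f-1))) * (2*f-1) * (⅟(2:R) * ((2*e-1) + (2*f-1))) = 2*e-1 ∧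
    ∀ w' : R, w' * w' = 1 → {x : R | w' * x = x} = {x : R | ∃ r, x = e * r} →
      w' * (2*f-1) * w' = 2*e-1 → w' = ⅟(2:R) * ((2*e-1) + (2*f-1)) := by
  have hmem : ∀ x, x ∈ {x : R | ∃ r, x = e * r} ↔ e * x = x := fun _ =>
    IsIdempotentElem.exists_eq_mul_iff he
  have hef_mul : e * f = f := (hmem f).mp (hef ▸ ⟨f, hf.symm⟩)
  have hfe_mul : f * e = e :=
    IsIdempotentElem.exists_eq_mul_iff hf |>.mp (hef ▸ ⟨e, he.symm⟩ : e ∈ {x : R | ∃ r, x = f * r})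
  rw [invOf_two_mul_add_two_mul_sub_one]
  refine ⟨add_sub_one_mul_self he hf hef_mul hfe_mul, ?_,
    add_sub_one_mul_two_mul_sub_one_mul he hf hef_mul hfe_mul, ?_⟩
  · ext x
    exact (add_sub_one_mul_eq_self_iff he hef_mul hfe_mul x).trans (hmem x).symm
  · intro w hw hfix hconj
    exact eq_add_sub_one_of_mul_two_mul_sub_one_mul hef_mul hw
      (fun x => (Set.ext_iff.mp hfix x).trans (hmem x)) hconj
end

section
/- Let e be a nontrivial idempotent (e ≠ 0, 1) in a unital ring R with 2 invertible. Then the intersection Δ⁺(e) ∩ Δ⁻(1-e) equals {2e - 1}, where Δ⁺(e) is the set of involutions w with {x : wx = x} = eR and Δ⁻(1-e) is the set of involutions w with {x : wx = -x} = (1-e)R. -/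
theorem stmt18 {R : Type*} [Ring R] [Invertible (2:R)] (e : R)
    (he : e * e = e) (h0 : e ≠ 0) (h1 : e ≠ 1) :
    {w : R | w * w = 1 ∧ {x : R | w * x = x} = {x : R | ∃ r, x = e * r}} ∩
      {w : R | w * w = 1 ∧ {x : R | w * x = -x} = {x : R | ∃ r, x = (1-e) * r}} =
      {2*e-1} := by
  have cancel2 : ∀ a b : R, 2 * a = 2 * b → a = b := fun a b h => by
    have := congrArg (⅟(2:R) * ·) h
    simpa [← mul_assoc, invOf_mul_self] using this
  ext w
  simp only [Set.mem_inter_iff, Set.mem_setOf_eq, Set.mem_singleton_iff]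
  constructor
  · rintro ⟨⟨_, hp⟩, ⟨_, hn⟩⟩
    have he1 : w * e = e := by
      have : e ∈ {x : R | ∃ r, x = e * r} := ⟨1, by rw [mul_one]⟩
      rw [← hp] at this; exact this
    have he2 : w * (1 - e) = -(1 - e) := by
      have : (1 - e) ∈ {x : R | ∃ r, x = (1-e) * r} := ⟨1, by rw [mul_one]⟩
      rw [← hn] at this; exact this
    have : w * (e + (1 - e)) = e - (1 - e) := by rw [mul_add, he1, he2]; noncomm_ring
    rw [add_sub_cancel, mul_one] at this
    rw [this]; noncomm_ring
  · rintro rfl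
    have hinv : (2*e-1) * (2*e-1) = 1 := by
      have : (2*e-1) * (2*e-1) = 4 * (e*e) - 4*e + 1 := by noncomm_ring
      rw [this, he]; noncomm_ring
    refine ⟨⟨hinv, ?_⟩, hinv, ?_⟩
    · ext x
      simp only [Set.mem_setOf_eq]
      constructor
      · intro h
        refine ⟨x, ?_⟩
        have : 2 * (e * x) = 2 * x := by
          have : (2*e-1)*x = 2*(e*x) - x := by noncomm_ring
          rw [this] at h
          have := congrArg (· + x) h
          simp only [sub_add_cancel] at this
          rw [this, two_mul]
        exact (cancel2 _ _ this).symm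
      · rintro ⟨r, rfl⟩
        have : (2*e-1) * (e * r) = (2 * (e*e) - e) * r := by noncomm_ring
        rw [this, he]; noncomm_ring
    · ext x
      simp only [Set.mem_setOf_eq]
      constructor
      · intro h
        refine ⟨x, ?_⟩
        have hex : e * x = 0 := by
          apply cancel2 _ 0
          have : (2*e-1)*x = 2*(e*x) - x := by noncomm_ring
          rw [this] at h
          have := congrArg (· + x) h
          simpa [sub_add_cancel] using this
        rw [sub_mul, one_mul, hex, sub_zero]
      · rintro ⟨r, rfl⟩
        have h0' : e * ((1-e) * r) = (e - e*e) * r := by noncomm_ring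
        rw [he, sub_self, zero_mul] at h0'
        have : (2*e-1) * ((1-e)*r) = 2 * (e * ((1-e)*r)) - (1-e)*r := by noncomm_ring
        rw [this, h0', mul_zero, zero_sub]
end

section
/- Let u and v be involutions in a unital ring R with 2 invertible such that u = 2e-1, v = 2f-1 with eR = fR, and suppose an involution s commutes with v. Then the element w* := 2(ses) - 1 is an involution with {x : w*x = x} = eR (using that ses is an idempotent and sesR = seR = sfR = fR when sv = vs); consequently s normalizes the set Δ⁺(e): sΔ⁺(e) = Δ⁺(e)s. -/
theorem stmt19 {R : Type*} [Ring R] [Invertible (2:R)] (e f s : R)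
    (he : e * e = e) (hf : f * f = f)
    (hef : {x : R | ∃ r, x = e * r} = {x : R | ∃ r, x = f * r})
    (hs : s * s = 1) (hsv : s * (2*f-1) = (2*f-1) * s) :
    (2*(s*e*s)-1) * (2*(s*e*s)-1) = 1 ∧
    {x : R | (2*(s*e*s)-1) * x = x} = {x : R | ∃ r, x = e * r} ∧
    (fun w => s * w) '' {w : R | w * w = 1 ∧ {x : R | w * x = x} = {x : R | ∃ r, x = e * r}} =
      (fun w => w * s) '' {w : R | w * w = 1 ∧ {x : R | w * x = x} = {x : R | ∃ r, x = e * r}} := by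
  -- basic cancellation facts
  have ss : ∀ x : R, s * (s * x) = x := fun x => by rw [← mul_assoc, hs, one_mul]
  have sinj : ∀ a b : R, s * a = s * b ↔ a = b := by
    intro a b
    constructor
    · intro h
      have := congrArg (fun y => s * y) h
      simpa [ss] using this
    · intro h; rw [h]
  have cancel2 : ∀ a b : R, (2:R) * a = 2 * b → a = b := by
    intro a b h
    have := congrArg (fun y => ⅟(2:R) * y) h
    simpa [invOf_mul_cancel_left] using this
  -- s * f = f * s
  have hsf : s * f = f * s := by
    have h1 : s * (2*f-1) = 2*(s*f) - s := by noncomm_ring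
    have h2 : (2*f-1) * s = 2*(f*s) - s := by noncomm_ring
    rw [h1, h2] at hsv
    exact cancel2 _ _ (sub_left_injective hsv)
  -- idempotent fixed points
  have he' : ∀ x : R, (∃ r, x = e * r) ↔ e * x = x := by
    intro x
    constructor
    · rintro ⟨r, rfl⟩; rw [← mul_assoc, he]
    · intro h; exact ⟨x, h.symm⟩
  have hf' : ∀ x : R, (∃ r, x = f * r) ↔ f * x = x := by
    intro x
    constructor
    · rintro ⟨r, rfl⟩; rw [← mul_assoc, hf]
    · intro h; exact ⟨x, h.symm⟩
  have hef' : ∀ x : R, e * x = x ↔ f * x = x := by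
    intro x
    rw [← he' x, ← hf' x]
    exact Set.ext_iff.mp hef x
  -- key: s preserves the set eR
  have hsx : ∀ x : R, e * (s * x) = s * x ↔ e * x = x := by
    intro x
    rw [hef' (s * x), hef' x]
    have hcomm : f * (s * x) = s * (f * x) := by
      rw [← mul_assoc, ← hsf, mul_assoc]
    rw [hcomm, ← sinj (f * x) x]
  -- (2a-1)x = x ↔ ax = x
  have key2 : ∀ a x : R, (2*a-1) * x = x ↔ a * x = x := by
    intro a x
    have hex : (2*a-1) * x = 2*(a*x) - x := by noncomm_ring
    constructor
    · intro h
      rw [hex] at h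
      have h2 : (2:R) * (a*x) = 2 * x := by
        have := sub_eq_iff_eq_add.mp h
        rw [this]; noncomm_ring
      exact cancel2 _ _ h2
    · intro h; rw [hex, h]; noncomm_ring
  -- conjugation lemma
  have hconj : ∀ w : R,
      (w * w = 1 ∧ {x : R | w * x = x} = {x : R | ∃ r, x = e * r}) →
      ((s*(w*s)) ∈ {w : R | w * w = 1 ∧ {x : R | w * x = x} = {x : R | ∃ r, x = e * r}}) := by
    rintro w ⟨hw1, hw2⟩
    constructor
    · show s*(w*s) * (s*(w*s)) = 1
      calc s*(w*s) * (s*(w*s)) = s * (w * (s * (s * (w * s)))) := by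
            simp only [mul_assoc]
        _ = s * (w * (w * s)) := by rw [ss]
        _ = s * ((w * w) * s) := by rw [mul_assoc]
        _ = 1 := by rw [hw1, one_mul, hs]
    · ext x
      show (s*(w*s)) * x = x ↔ ∃ r, x = e * r
      have hstep : (s*(w*s)) * x = s * (w * (s * x)) := by simp only [mul_assoc]
      have hx : x = s * (s * x) := (ss x).symm
      constructor
      · intro h
        rw [hstep] at h
        have h2 : w * (s * x) = s * x := by
          have := h.trans hx
          exact (sinj _ _).mp this
        have h3 : ∃ r, s * x = e * r := Set.ext_iff.mp hw2 (s * x) |>.mp h2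
        have h4 : e * (s * x) = s * x := (he' _).mp h3
        exact (he' x).mpr ((hsx x).mp h4)
      · intro h
        have h4 : e * x = x := (he' x).mp h
        have h5 : e * (s * x) = s * x := (hsx x).mpr h4
        have h3 : ∃ r, s * x = e * r := (he' _).mpr h5
        have h2 : w * (s * x) = s * x := Set.ext_iff.mp hw2 (s * x) |>.mpr h3
        rw [hstep, h2]; exact (ss x)
  refine ⟨?_, ?_, ?_⟩
  · -- involution
    have hses : (s*e*s) * (s*e*s) = s*e*s := by
      calc (s*e*s) * (s*e*s) = s * (e * (s * (s * (e * s)))) := by simp only [mul_assoc]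
        _ = s * (e * (e * s)) := by rw [ss]
        _ = s * ((e * e) * s) := by rw [mul_assoc]
        _ = s*e*s := by rw [he, mul_assoc]
    have hex : (2*(s*e*s)-1) * (2*(s*e*s)-1)
        = 4*((s*e*s)*(s*e*s)) - 4*(s*e*s) + 1 := by noncomm_ring
    rw [hex, hses]; noncomm_ring
  · -- fixed set
    ext x
    show (2*(s*e*s)-1) * x = x ↔ ∃ r, x = e * r
    rw [key2]
    have hstep : (s*e*s) * x = s * (e * (s * x)) := by simp only [mul_assoc]
    have hx : x = s * (s * x) := (ss x).symm
    rw [he' x, ← hsx x]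
    constructor
    · intro h
      rw [hstep] at h
      exact (sinj _ _).mp (h.trans hx)
    · intro h
      rw [hstep, h]; exact ss x
  · -- normalization
    ext y
    simp only [Set.mem_image]
    constructor
    · rintro ⟨w, hw, rfl⟩
      refine ⟨s*(w*s), hconj w hw, ?_⟩
      show (s*(w*s)) * s = s * w
      calc (s*(w*s)) * s = s * (w * (s * s)) := by simp only [mul_assoc]
        _ = s * w := by rw [hs, mul_one]
    · rintro ⟨w, hw, rfl⟩
      refine ⟨s*(w*s), hconj w hw, ?_⟩
      show s * (s*(w*s)) = w * s
      rw [ss]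
end
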